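/- arXiv:1509.03734 — 4 statements merged into one kernel-verified Lean document; each statement's English description precedes it below -/
import Mathlib

section
/- In Region 2 (both wild and commercial bees present), the solution of the first-order conditions ∂q/∂x₁ / ∂q/∂x₂ = w₁/w₂ and q(x₁,x₂) = q̄ for q(x₁,x₂) = (κ - g·x₁ + x₂)^α · x₁^(1-α) is x̂₁ = Δ₁^α·q̄ and x̂₂ = Δ₁^α·(α·w₁ + w₂·g)/((1-α)·w₂)·q̄ - κ, where Δ₁ = ((1-α)/α)·w₂/(w₁ + w₂·g). -/
/-! Writing `s = κ - g·x₁ + x₂`, the marginal rate of technical substitution of `q` is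
`((1 - α)/α)·(s/x₁) - g`. At the proposed point `s = x₁/Δ₁`, so the MRTS equals
`(w₁ + w₂·g)/w₂ - g = w₁/w₂`, and the output is `(x₁/Δ₁)^α·x₁^(1-α) = x₁/Δ₁^α = q`. -/

section PesticideProduction

variable {κ g α a b : ℝ}

theorem hasDerivAt_pesticide_fst (hs : 0 < κ - g * a + b) (ha : 0 < a) :
    HasDerivAt (fun x => (κ - g * x + b) ^ α * x ^ (1 - α))
      ((κ - g * a + b) ^ α * a ^ (1 - α) * ((1 - α) / a - g * α / (κ - g * a + b))) a := by
  have hlin : HasDerivAt (fun x => κ - g * x + b) (-g) a := by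
    simpa using (((hasDerivAt_id a).const_mul g).const_sub κ).add_const b
  refine ((hlin.rpow_const (Or.inl hs.ne')).mul
    (Real.hasDerivAt_rpow_const (Or.inl ha.ne'))).congr_deriv ?_
  rw [Real.rpow_sub_one hs.ne', Real.rpow_sub_one ha.ne']
  field_simp
  ring

theorem hasDerivAt_pesticide_snd (hs : 0 < κ - g * a + b) :
    HasDerivAt (fun y => (κ - g * a + y) ^ α * a ^ (1 - α))
      ((κ - g * a + b) ^ α * a ^ (1 - α) * (α / (κ - g * a + b))) b := by
  have hlin : HasDerivAt (fun y => κ - g * a + y) 1 b := by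
    simpa using (hasDerivAt_id b).const_add (κ - g * a)
  refine ((hlin.rpow_const (Or.inl hs.ne')).mul_const (a ^ (1 - α))).congr_deriv ?_
  rw [Real.rpow_sub_one hs.ne']
  field_simp

theorem pesticide_mrts (hα : α ≠ 0) (hs : 0 < κ - g * a + b) (ha : 0 < a) :
    deriv (fun x => (κ - g * x + b) ^ α * x ^ (1 - α)) a /
        deriv (fun y => (κ - g * a + y) ^ α * a ^ (1 - α)) b =
      (1 - α) / α * ((κ - g * a + b) / a) - g := by
  rw [(hasDerivAt_pesticide_fst hs ha).deriv, (hasDerivAt_pesticide_snd hs).deriv]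
  have : 0 < (κ - g * a + b) ^ α * a ^ (1 - α) := by positivity
  field_simp

end PesticideProduction

theorem div_rpow_mul_rpow_one_sub {x d : ℝ} (α : ℝ) (hx : 0 < x) (hd : 0 < d) :
    (x / d) ^ α * x ^ (1 - α) = x / d ^ α := by
  rw [Real.div_rpow hx.le hd.le, div_mul_eq_mul_div, ← Real.rpow_add hx, add_sub_cancel,
    Real.rpow_one]

theorem region2_foc_general (κ g w₁ w₂ α q : ℝ) (hg : 0 < g)
    (hw₁ : 0 < w₁) (hw₂ : 0 < w₂) (hα : 0 < α) (hα1 : α < 1) (hq : 0 < q) :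
    let Δ₁ : ℝ := ((1 - α) / α) * w₂ / (w₁ + w₂ * g)
    let x₁ : ℝ := Δ₁ ^ α * q
    let x₂ : ℝ := Δ₁ ^ α * (α * w₁ + w₂ * g) / ((1 - α) * w₂) * q - κ
    let Q : ℝ → ℝ → ℝ := fun a b => (κ - g * a + b) ^ α * a ^ (1 - α)
    0 < x₂ → 0 < κ - g * x₁ →
      (deriv (fun a => Q a x₂) x₁) / (deriv (fun b => Q x₁ b) x₂) = w₁ / w₂ ∧
      Q x₁ x₂ = q := by
  intro Δ₁ x₁ x₂ Q hx₂ hκx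
  have hα' : 0 < 1 - α := sub_pos.mpr hα1
  have hΔ : 0 < Δ₁ := by positivity
  have hx₁ : 0 < x₁ := by positivity
  have hs : κ - g * x₁ + x₂ = x₁ / Δ₁ := by
    simp only [x₁, x₂, Δ₁]
    field_simp
    ring
  constructor
  · rw [pesticide_mrts hα.ne' (by linarith) hx₁, hs]
    simp only [Δ₁]
    field_simp
    ring
  · show (κ - g * x₁ + x₂) ^ α * x₁ ^ (1 - α) = q
    rw [hs, div_rpow_mul_rpow_one_sub α hx₁ hΔ]
    exact mul_div_cancel_left₀ q (by positivity)

/-- Region-2 interior solution satisfies the first-order condition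
(marginal rate of technical substitution = price ratio) and the output constraint. -/
theorem region2_foc (κ g w₁ w₂ α q : ℝ) (hκ : 0 < κ) (hg : 0 < g)
    (hw₁ : 0 < w₁) (hw₂ : 0 < w₂) (hα : 0 < α) (hα1 : α < 1) (hq : 0 < q) :
    let Δ₁ : ℝ := ((1 - α) / α) * w₂ / (w₁ + w₂ * g)
    let x₁ : ℝ := Δ₁ ^ α * q
    let x₂ : ℝ := Δ₁ ^ α * (α * w₁ + w₂ * g) / ((1 - α) * w₂) * q - κ
    let Q : ℝ → ℝ → ℝ := fun a b => (κ - g * a + b) ^ α * a ^ (1 - α)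
    0 < x₂ → 0 < κ - g * x₁ →
      (deriv (fun a => Q a x₂) x₁) / (deriv (fun b => Q x₁ b) x₂) = w₁ / w₂ ∧
      Q x₁ x₂ = q :=
  region2_foc_general κ g w₁ w₂ α q hg hw₁ hw₂ hα hα1 hq
end

section
/- The threshold q̄_c = κ·Δ₁^(1-α)/(1 + g·Δ₁) with Δ₁ = ((1-α)/α)·w₂/(w₁ + w₂·g) satisfies q̄_c < q̄_m = κ/(2√g) when α = 1/2, i.e. commercial bees become optimal strictly before the maximal wild-bees-only output is reached, for all w₁, w₂, κ, g > 0 with w₁ ≠ w₂·g. -/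
/-- for α = 1/2, the commercial-bee threshold q̄_c is strictly below
the maximal wild-bees-only output q̄_m = κ/(2√g), whenever w₁ ≠ w₂·g. -/
theorem threshold_below_max (κ g w₁ w₂ : ℝ) (hκ : 0 < κ) (hg : 0 < g)
    (hw₁ : 0 < w₁) (hw₂ : 0 < w₂) (hne : w₁ ≠ w₂ * g) :
    let Δ₁ : ℝ := w₂ / (w₁ + w₂ * g)
    κ * Δ₁ ^ ((1 : ℝ) / 2) / (1 + g * Δ₁) < κ / (2 * Real.sqrt g) := by
  intro Δ₁
  have hden : 0 < w₁ + w₂ * g := by positivity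
  have hΔ : 0 < Δ₁ := div_pos hw₂ hden
  have hgΔ : g * Δ₁ < 1 := by
    have : g * Δ₁ = g * w₂ / (w₁ + w₂ * g) := by rw [mul_div_assoc']
    rw [this, div_lt_one hden]; nlinarith
  have hrw : Δ₁ ^ ((1 : ℝ) / 2) = Real.sqrt Δ₁ := (Real.sqrt_eq_rpow Δ₁).symm
  set t := Real.sqrt (g * Δ₁) with ht
  have ht0 : 0 ≤ t := Real.sqrt_nonneg _
  have ht2 : t ^ 2 = g * Δ₁ := Real.sq_sqrt (by positivity)
  have ht1 : t < 1 := by nlinarith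
  have hkey : 2 * t < 1 + g * Δ₁ := by nlinarith [sq_nonneg (1 - t)]
  have hmul : Real.sqrt g * Real.sqrt Δ₁ = t := (Real.sqrt_mul hg.le Δ₁).symm
  have hsg : 0 < Real.sqrt g := Real.sqrt_pos.mpr hg
  rw [hrw, div_lt_div_iff₀ (by positivity) (by positivity)]
  nlinarith [Real.sqrt_nonneg Δ₁, mul_pos hκ hsg]
end

section
/- For α = 1/2, minimizing c = w₁x₁ + w₂x₂ subject to (x₂/(1 + η·x₂))^(1/2)·x₁^(1/2) = q̄ with η ≥ 0 (and q̄·η·√(w₁/w₂) implicitly feasible) yields x̂₁ = √(w₂/w₁)·q̄ + η·q̄², x̂₂ = √(w₁/w₂)·q̄, and minimum cost 2√(w₁w₂)·q̄ + η·w₁·q̄². -/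
/-!
On the constraint the pesticide input is forced, `x₁ = q̄² / x₂ + η q̄²`, so the cost becomes
`w₁ q̄² / x₂ + w₂ x₂ + η w₁ q̄²`. By AM–GM the first two terms are at least `2 √(w₁ w₂) q̄`,
with equality at `x₂ = √(w₁ / w₂) q̄`.
-/

open Real

theorem Real.two_mul_sqrt_mul_le_add {u v : ℝ} (hu : 0 ≤ u) (hv : 0 ≤ v) :
    2 * √(u * v) ≤ u + v := by
  simpa [sqrt_mul hu, mul_assoc, sq_sqrt hu, sq_sqrt hv] using two_mul_le_add_sq √u √v

theorem Real.mul_sqrt_div_self {x : ℝ} (hx : 0 ≤ x) (y : ℝ) : x * √(y / x) = √(x * y) := by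
  rcases hx.eq_or_lt with rfl | hx
  · simp
  · rw [show x * y = x ^ 2 * (y / x) by field_simp, sqrt_mul (sq_nonneg x), sqrt_sq hx.le]

theorem sqrt_div_one_add_mul_mul_sqrt_eq_iff {η a b q : ℝ} (hη : 0 ≤ η) (ha : 0 ≤ a)
    (hb : 0 < b) (hq : 0 ≤ q) :
    √(b / (1 + η * b)) * √a = q ↔ a = q ^ 2 / b + η * q ^ 2 := by
  have hden : 0 < 1 + η * b := by positivity
  rw [← sqrt_mul (by positivity), sqrt_eq_iff_eq_sq (by positivity) hq]
  constructor <;> intro h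
  · field_simp at h ⊢
    linarith
  · rw [h]
    field_simp

theorem two_mul_sqrt_mul_mul_le_div_add_mul {w₁ w₂ b q : ℝ} (hw₁ : 0 ≤ w₁) (hw₂ : 0 ≤ w₂)
    (hb : 0 < b) (hq : 0 ≤ q) :
    2 * √(w₁ * w₂) * q ≤ w₁ * q ^ 2 / b + w₂ * b := by
  have hprod : w₁ * q ^ 2 / b * (w₂ * b) = w₁ * w₂ * q ^ 2 := by field_simp
  have h := two_mul_sqrt_mul_le_add (u := w₁ * q ^ 2 / b) (v := w₂ * b) (by positivity)
    (by positivity)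
  rwa [hprod, sqrt_mul (mul_nonneg hw₁ hw₂), sqrt_sq hq, ← mul_assoc] at h

/-- optimal inputs and minimum cost with saturating pollination
B(x₂) = x₂/(1+ηx₂) and linear pesticide term, α = 1/2. -/
theorem saturating_pollination (w₁ w₂ η q : ℝ)
    (hw₁ : 0 < w₁) (hw₂ : 0 < w₂) (hη : 0 ≤ η) (hq : 0 < q) :
    let x₁ : ℝ := Real.sqrt (w₂ / w₁) * q + η * q ^ 2
    let x₂ : ℝ := Real.sqrt (w₁ / w₂) * q
    let c : ℝ → ℝ → ℝ := fun a b => w₁ * a + w₂ * b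
    Real.sqrt (x₂ / (1 + η * x₂)) * Real.sqrt x₁ = q ∧
    (∀ a b : ℝ, 0 < a → 0 < b →
      Real.sqrt (b / (1 + η * b)) * Real.sqrt a = q → c x₁ x₂ ≤ c a b) ∧
    c x₁ x₂ = 2 * Real.sqrt (w₁ * w₂) * q + η * w₁ * q ^ 2 := by
  intro x₁ x₂ c
  have hx₂ : 0 < x₂ := by positivity
  have hx₁ : x₁ = q ^ 2 / x₂ + η * q ^ 2 := by
    simp only [x₁, x₂]
    rw [← inv_div w₁, sqrt_inv]
    field_simp
  have hcost : c x₁ x₂ = 2 * √(w₁ * w₂) * q + η * w₁ * q ^ 2 := by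
    have h₁ := mul_sqrt_div_self hw₁.le w₂
    have h₂ := mul_sqrt_div_self hw₂.le w₁
    rw [mul_comm w₂ w₁] at h₂
    simp only [c, x₁, x₂]
    linear_combination q * h₁ + q * h₂
  refine ⟨(sqrt_div_one_add_mul_mul_sqrt_eq_iff hη (by positivity) hx₂ hq.le).2 hx₁,
    fun a b ha hb hab => ?_, hcost⟩
  rw [sqrt_div_one_add_mul_mul_sqrt_eq_iff hη ha.le hb hq.le] at hab
  have hamgm := two_mul_sqrt_mul_mul_le_div_add_mul hw₁.le hw₂.le hb hq.le
  simp only [hcost, c, hab]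
  linarith [show w₁ * (q ^ 2 / b + η * q ^ 2) = w₁ * q ^ 2 / b + η * w₁ * q ^ 2 by ring]
end

section
/- For α = 1/2, minimizing c = w₁x₁ + w₂x₂ subject to x₂^(1/2)·(x₁/(1 + ρ·x₁))^(1/2) = q̄ with ρ ≥ 0 yields x̂₁ = √(w₂/w₁)·q̄, x̂₂ = √(w₁/w₂)·q̄ + ρ·q̄², and minimum cost 2√(w₁w₂)·q̄ + ρ·w₂·q̄²; the marginal cost 2√(w₁w₂) + 2ρ·w₂·q̄ is strictly increasing in q̄ when ρ > 0. -/
set_option maxHeartbeats 1000000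


/-- optimal inputs and minimum cost with saturating pesticide
efficiency P(x₁) = x₁/(1+ρx₁) and linear pollination, α = 1/2; the marginal
cost is strictly increasing in q̄ when ρ > 0. -/
theorem saturating_pesticide (w₁ w₂ ρ q : ℝ)
    (hw₁ : 0 < w₁) (hw₂ : 0 < w₂) (hρ : 0 ≤ ρ) (hq : 0 < q) :
    let x₁ : ℝ := Real.sqrt (w₂ / w₁) * q
    let x₂ : ℝ := Real.sqrt (w₁ / w₂) * q + ρ * q ^ 2
    let c : ℝ → ℝ → ℝ := fun a b => w₁ * a + w₂ * b
    Real.sqrt x₂ * Real.sqrt (x₁ / (1 + ρ * x₁)) = q ∧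
    (∀ a b : ℝ, 0 < a → 0 < b →
      Real.sqrt b * Real.sqrt (a / (1 + ρ * a)) = q → c x₁ x₂ ≤ c a b) ∧
    c x₁ x₂ = 2 * Real.sqrt (w₁ * w₂) * q + ρ * w₂ * q ^ 2 ∧
    (0 < ρ → StrictMono (fun q' : ℝ => 2 * Real.sqrt (w₁ * w₂) + 2 * ρ * w₂ * q')) := by
  intro x₁ x₂ c
  have hA : (0:ℝ) < Real.sqrt (w₂ / w₁) := Real.sqrt_pos.mpr (div_pos hw₂ hw₁)
  have hB : (0:ℝ) < Real.sqrt (w₁ / w₂) := Real.sqrt_pos.mpr (div_pos hw₁ hw₂)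
  set A := Real.sqrt (w₂ / w₁) with hAdef
  set B := Real.sqrt (w₁ / w₂) with hBdef
  set S := Real.sqrt (w₁ * w₂) with hSdef
  have hS : (0:ℝ) < S := Real.sqrt_pos.mpr (mul_pos hw₁ hw₂)
  have hS2 : S ^ 2 = w₁ * w₂ := Real.sq_sqrt (mul_pos hw₁ hw₂).le
  have hA2 : A ^ 2 = w₂ / w₁ := Real.sq_sqrt (div_pos hw₂ hw₁).le
  have hB2 : B ^ 2 = w₁ / w₂ := Real.sq_sqrt (div_pos hw₁ hw₂).le
  have hw1A : w₁ * A = S := by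
    have h1 : (w₁ * A) ^ 2 = S ^ 2 := by
      rw [mul_pow, hA2, hS2]; field_simp
    have h2 : 0 ≤ w₁ * A := by positivity
    nlinarith [h1, h2, hS.le]
  have hw2B : w₂ * B = S := by
    have h1 : (w₂ * B) ^ 2 = S ^ 2 := by
      rw [mul_pow, hB2, hS2]; field_simp
    have h2 : 0 ≤ w₂ * B := by positivity
    nlinarith [h1, h2, hS.le]
  have hAB : A * B = 1 := by
    have h : w₁ * A * (w₂ * B) = w₁ * w₂ := by rw [hw1A, hw2B]; nlinarith [hS2]
    have hw12 : (0:ℝ) < w₁ * w₂ := mul_pos hw₁ hw₂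
    field_simp at h
    nlinarith [h, hw12]
  have hx1e : x₁ = A * q := rfl
  have hx2e : x₂ = B * q + ρ * q ^ 2 := rfl
  have hx₁ : (0:ℝ) < x₁ := by rw [hx1e]; positivity
  have hden : (0:ℝ) < 1 + ρ * x₁ := by positivity
  have hx₂ : (0:ℝ) < x₂ := by rw [hx2e]; positivity
  have hcost : c x₁ x₂ = 2 * S * q + ρ * w₂ * q ^ 2 := by
    show w₁ * x₁ + w₂ * x₂ = 2 * S * q + ρ * w₂ * q ^ 2
    rw [hx1e, hx2e]
    linear_combination q * hw1A + q * hw2B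
  refine ⟨?_, ?_, hcost, ?_⟩
  · rw [← Real.sqrt_mul hx₂.le]
    have key : x₂ * (x₁ / (1 + ρ * x₁)) = q ^ 2 := by
      rw [mul_div_assoc', div_eq_iff hden.ne']
      rw [hx1e, hx2e]
      linear_combination q ^ 2 * hAB
    rw [key, Real.sqrt_sq hq.le]
  · intro a b ha hb hab
    have hdena : (0:ℝ) < 1 + ρ * a := by positivity
    have h1 : b * (a / (1 + ρ * a)) = q ^ 2 := by
      have := congrArg (· ^ 2) hab
      simpa [mul_pow, Real.sq_sqrt hb.le,
        Real.sq_sqrt (div_nonneg ha.le hdena.le)] using this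
    have hba : b * a = q ^ 2 * (1 + ρ * a) := by
      rw [mul_div_assoc', div_eq_iff hdena.ne'] at h1
      linarith [h1]
    rw [hcost]
    show 2 * S * q + ρ * w₂ * q ^ 2 ≤ w₁ * a + w₂ * b
    have key2 : 0 ≤ w₁ * a ^ 2 + w₂ * q ^ 2 - 2 * S * q * a := by
      nlinarith [sq_nonneg (w₁ * a - S * q), hS2, hw₁]
    have h3 : a * (w₁ * a + w₂ * b - (2 * S * q + ρ * w₂ * q ^ 2))
        = w₁ * a ^ 2 + w₂ * q ^ 2 - 2 * S * q * a := by
      linear_combination w₂ * hba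
    have h4 : 0 ≤ a * (w₁ * a + w₂ * b - (2 * S * q + ρ * w₂ * q ^ 2)) := by
      rw [h3]; exact key2
    nlinarith [h4, ha]
  · intro hρpos x y hxy
    show 2 * S + 2 * ρ * w₂ * x < 2 * S + 2 * ρ * w₂ * y
    have h5 : (0:ℝ) < 2 * ρ * w₂ := by positivity
    nlinarith [mul_lt_mul_of_pos_left hxy h5]
end
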